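/- arXiv:2306.10253 — 2 statements merged into one kernel-verified Lean document; each statement's English description precedes it below -/
import Mathlib

section
/- Let A be an n×n matrix over an algebraically closed field, λ an eigenvalue of A with Jordan block sizes k_{λ,1} ≥ ... ≥ k_{λ,m} (largest m, padded with zeros), and let B be an n×n matrix of rank at most m. If k_{λ,m} > 0, then rank((A + B - λI)^{k_{λ,m}}) ≤ n - alg_λ(A) + Σ_{j=1}^{m} k_{λ,j}. -/
/-!
Put `N = A - λI` and `p = k_{λ,m}`. Each step of
`(N + B)^(q+1) - N^(q+1) = (N + B)((N + B)^q - N^q) + B N^q` adds at most `rank B` to the rank,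
so `rank((N + B)^p) ≤ rank(N^p) + p · rank B ≤ rank(N^p) + p m`. The Jordan rank identity gives
`rank(N^p) = n - m p - ∑_{j>m} k_{λ,j}`, because the first `m` sizes are at least `p` and the
others at most `p`; and `alg_λ(A) = n - rank(N^n) ≤ ∑_j k_{λ,j}`.
-/

/-- `k` is the nonincreasing, zero-padded sequence of the sizes of the Jordan blocks of `A`
for the eigenvalue `lam` (indexed from `0`, so `k 0 = k_{λ,1}`), characterized by the
standard rank identities `rank((A-λI)^j) = n - ∑_{i<n} min(kᵢ, j)` for all `j`. -/
def JordanSizes {F : Type*} [Field F] {n : ℕ} (A : Matrix (Fin n) (Fin n) F) (lam : F)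
    (k : ℕ → ℕ) : Prop :=
  Antitone k ∧ (∀ i, n ≤ i → k i = 0) ∧
    ∀ j : ℕ, ((A - lam • (1 : Matrix (Fin n) (Fin n) F)) ^ j).rank
      = n - ∑ i ∈ Finset.range n, min (k i) j

open Finset Module

namespace Matrix

variable {F : Type*} [Field F]

theorem rank_add_le {m n : Type*} [Fintype n] (A B : Matrix m n F) :
    (A + B).rank ≤ A.rank + B.rank := by
  rw [rank, rank, rank, mulVecLin_add]
  exact (Submodule.finrank_mono (LinearMap.range_add_le _ _)).trans
    (Submodule.finrank_add_le_finrank_add_finrank _ _)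

variable {n : Type*} [Fintype n] [DecidableEq n]

theorem rank_add_pow_sub_pow_le (N B : Matrix n n F) (p : ℕ) :
    ((N + B) ^ p - N ^ p).rank ≤ p * B.rank := by
  induction p with
  | zero => simp
  | succ p ih =>
    have hstep : (N + B) ^ (p + 1) - N ^ (p + 1)
        = (N + B) * ((N + B) ^ p - N ^ p) + B * N ^ p := by
      rw [pow_succ', pow_succ', mul_sub, add_mul N B (N ^ p)]
      abel
    calc ((N + B) ^ (p + 1) - N ^ (p + 1)).rank
        ≤ ((N + B) * ((N + B) ^ p - N ^ p)).rank + (B * N ^ p).rank :=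
          hstep ▸ rank_add_le _ _
      _ ≤ ((N + B) ^ p - N ^ p).rank + B.rank :=
          add_le_add (rank_mul_le_right _ _) (rank_mul_le_left _ _)
      _ ≤ (p + 1) * B.rank := by rw [add_one_mul]; gcongr

theorem rank_add_pow_le (N B : Matrix n n F) (p : ℕ) :
    ((N + B) ^ p).rank ≤ (N ^ p).rank + p * B.rank := by
  calc ((N + B) ^ p).rank = (N ^ p + ((N + B) ^ p - N ^ p)).rank := by rw [add_sub_cancel]
    _ ≤ (N ^ p).rank + p * B.rank :=
      (rank_add_le _ _).trans (add_le_add_right (rank_add_pow_sub_pow_le N B p) _)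

theorem rank_sub_smul_one_pow_card_add_rootMultiplicity (A : Matrix n n F) (μ : F) :
    ((A - μ • (1 : Matrix n n F)) ^ Fintype.card n).rank + A.charpoly.rootMultiplicity μ
      = Fintype.card n := by
  have hker : End.maxGenEigenspace (toLin' A) μ
      = LinearMap.ker (toLin' ((A - μ • (1 : Matrix n n F)) ^ Fintype.card n)) := by
    rw [End.maxGenEigenspace_eq_genEigenspace_finrank, finrank_fintype_fun_eq_card,
      End.genEigenspace_nat, toLin'_pow, map_sub, map_smul, toLin'_one]
    rfl
  have hmult := LinearMap.finrank_maxGenEigenspace_eq (toLin' A) μ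
  rw [charpoly_toLin', hker] at hmult
  rw [rank, ← hmult, ← toLin'_apply', LinearMap.finrank_range_add_finrank_ker,
    finrank_fintype_fun_eq_card]

end Matrix

theorem Antitone.sum_range_min_pred {k : ℕ → ℕ} (hk : Antitone k) {m n : ℕ}
    (hmn : m ≤ n) :
    ∑ i ∈ range n, min (k i) (k (m - 1)) = m * k (m - 1) + ∑ i ∈ Ico m n, k i := by
  rw [← sum_range_add_sum_Ico _ hmn]
  congr 1
  · calc ∑ i ∈ range m, min (k i) (k (m - 1)) = ∑ _i ∈ range m, k (m - 1) :=
          sum_congr rfl fun i hi => min_eq_right (hk (by simp at hi; omega))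
      _ = m * k (m - 1) := by simp
  · exact sum_congr rfl fun i hi => min_eq_left (hk (by simp at hi; omega))

theorem Antitone.mul_pred_le_sum_range {k : ℕ → ℕ} (hk : Antitone k) (m : ℕ) :
    m * k (m - 1) ≤ ∑ i ∈ range m, k i := by
  simpa using card_nsmul_le_sum (range m) k (k (m - 1)) fun i hi => hk (by simp at hi; omega)

namespace JordanSizes

variable {F : Type*} [Field F] {n : ℕ} {A : Matrix (Fin n) (Fin n) F} {lam : F} {k : ℕ → ℕ}

theorem lt_of_pos (hk : JordanSizes A lam k) {i : ℕ} (hi : 0 < k i) : i < n := by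
  by_contra! h
  exact hi.ne' (hk.2.1 i h)

theorem rootMultiplicity_le_sum (hk : JordanSizes A lam k) :
    A.charpoly.rootMultiplicity lam ≤ ∑ i ∈ range n, k i := by
  have hmult := A.rank_sub_smul_one_pow_card_add_rootMultiplicity lam
  rw [Fintype.card_fin, hk.2.2 n] at hmult
  have : ∑ i ∈ range n, min (k i) n ≤ ∑ i ∈ range n, k i :=
    sum_le_sum fun _ _ => min_le_left _ _
  omega

end JordanSizes

theorem stmt_6_general {F : Type*} [Field F] {n : ℕ}
    (A B : Matrix (Fin n) (Fin n) F) (m : ℕ) (hB : B.rank ≤ m)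
    (lam : F)
    (k : ℕ → ℕ) (hk : JordanSizes A lam k) (hkm : 0 < k (m - 1)) :
    ((A + B - lam • (1 : Matrix (Fin n) (Fin n) F)) ^ (k (m - 1))).rank
      ≤ n - A.charpoly.rootMultiplicity lam + ∑ j ∈ Finset.range m, k j := by
  have hmn : m ≤ n := by have := hk.lt_of_pos hkm; omega
  rw [add_sub_right_comm]
  set p := k (m - 1)
  set N := A - lam • (1 : Matrix (Fin n) (Fin n) F)
  have hNp : (N ^ p).rank = n - (m * p + ∑ i ∈ Ico m n, k i) := by
    rw [hk.2.2 p, hk.1.sum_range_min_pred hmn]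
  have hperturb : ((N + B) ^ p).rank ≤ (N ^ p).rank + m * p := by
    grw [N.rank_add_pow_le B p, hB, mul_comm]
  have hprefix : m * p ≤ ∑ i ∈ range m, k i := hk.1.mul_pred_le_sum_range m
  have hsplit := sum_range_add_sum_Ico k hmn
  have halg := hk.rootMultiplicity_le_sum
  omega

/-- If `λ` is an eigenvalue of `A` over an algebraically closed field with Jordan block
sizes `k 0 ≥ k 1 ≥ ⋯` (so the `m`-th size `k_{λ,m}` is `k (m-1)`), `B` has rank at most `m`,
and `k (m-1) > 0`, then
`rank((A + B - λI)^(k (m-1))) ≤ n - alg_λ(A) + ∑_{j=1}^m k_{λ,j}`. -/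
theorem stmt_6 {F : Type*} [Field F] [IsAlgClosed F] {n : ℕ}
    (A B : Matrix (Fin n) (Fin n) F) (m : ℕ) (hm : 0 < m) (hB : B.rank ≤ m)
    (lam : F) (heig : A.charpoly.IsRoot lam)
    (k : ℕ → ℕ) (hk : JordanSizes A lam k) (hkm : 0 < k (m - 1)) :
    ((A + B - lam • (1 : Matrix (Fin n) (Fin n) F)) ^ (k (m - 1))).rank
      ≤ n - A.charpoly.rootMultiplicity lam + ∑ j ∈ Finset.range m, k j :=
  stmt_6_general A B m hB lam k hk hkm
end

section
/- Rank-one case: let A be an n×n matrix over a field F whose rational canonical form has invariant factors p_1 | ... | p_s, and let q ∈ F[x] be monic of degree n. There exists a rank ≤ 1 matrix B over F with char poly of A+B equal to q if and only if p_1·p_2···p_{s−1} divides q. -/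
/-- The companion matrix of a monic polynomial `p` of degree `d`. -/
def companionMatrix {F : Type*} [Field F] (d : ℕ) (p : Polynomial F) :
    Matrix (Fin d) (Fin d) F :=
  Matrix.of fun i j =>
    if (j : ℕ) = d - 1 then -p.coeff i else if (i : ℕ) = (j : ℕ) + 1 then 1 else 0

/-!
Write `g = p₁ ⋯ pₛ₋₁`, so that `χ_A = g · pₛ` and `pₛ(A) = 0`.

Necessity. Since `X·1` and `A` commute, `X·1 - A` left-divides `pₛ(X)·1 - pₛ(A) = pₛ(X)·1`;
multiplying `pₛ(X)·1 = (X·1 - A) Q` on the left by `adj (X·1 - A)` and cancelling the monic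
`pₛ` gives `adj (X·1 - A) = g Q`. By the matrix determinant lemma
`det (M + u vᵀ) = det M + vᵀ (adj M) u`, every rank-one perturbation then has
`χ_{A+B} ≡ χ_A ≡ 0 mod g`.

Sufficiency. If `q = g r`, replacing the last companion block `C(pₛ)` of the rational canonical
form by `C(r)` changes a single column, so it is a perturbation of rank at most one, and the new
characteristic polynomial is `g r = q`.
-/

open Matrix Polynomial Finset

theorem Commute.sub_dvd_aeval_sub {R S : Type*} [CommRing R] [Ring S] [Algebra R S] {x y : S}
    (h : Commute x y) (f : R[X]) : x - y ∣ aeval x f - aeval y f := by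
  induction f using Polynomial.induction_on' with
  | add f g hf hg =>
    rw [map_add, map_add, add_sub_add_comm]
    exact dvd_add hf hg
  | monomial k a =>
    obtain ⟨c, hc⟩ := h.sub_dvd_pow_sub_pow k
    refine ⟨algebraMap R S a * c, ?_⟩
    rw [aeval_monomial, aeval_monomial, ← mul_sub, hc, ← mul_assoc, ← mul_assoc,
      Algebra.commutes]

namespace Matrix

section BlockDiagonal

variable {R : Type*} [CommRing R] {o : Type*} [Fintype o] [DecidableEq o]
  {d : o → Type*} [∀ i, Fintype (d i)] [∀ i, DecidableEq (d i)]

theorem det_blockDiagonal' (N : ∀ i, Matrix (d i) (d i) R) :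
    (blockDiagonal' N).det = ∏ i, (N i).det := by
  let : LinearOrder o := LinearOrder.lift' _ (Fintype.equivFin o).injective
  rw [(blockTriangular_blockDiagonal' N).det_fintype]
  refine prod_congr rfl fun k _ => ?_
  have : (blockDiagonal' N).toSquareBlock Sigma.fst k
      = (N k).submatrix (Equiv.sigmaSubtype k) (Equiv.sigmaSubtype k) := by
    ext ⟨⟨a, x⟩, ha⟩ ⟨⟨b, y⟩, hb⟩
    dsimp only at ha hb
    subst ha hb
    simp [toSquareBlock_def, blockDiagonal'_apply_eq]
  rw [this, det_submatrix_equiv_self]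

theorem charmatrix_blockDiagonal' (N : ∀ i, Matrix (d i) (d i) R) :
    charmatrix (blockDiagonal' N) = blockDiagonal' fun i => charmatrix (N i) := by
  refine Matrix.ext fun ⟨a, x⟩ ⟨b, y⟩ => ?_
  rcases eq_or_ne a b with rfl | hab
  · simp [charmatrix_apply, diagonal_apply]
  · simp [hab, blockDiagonal'_apply_ne]

theorem charpoly_blockDiagonal' (N : ∀ i, Matrix (d i) (d i) R) :
    (blockDiagonal' N).charpoly = ∏ i, (N i).charpoly := by
  rw [charpoly, charmatrix_blockDiagonal', det_blockDiagonal']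
  rfl

theorem aeval_blockDiagonal' (N : ∀ i, Matrix (d i) (d i) R) (f : R[X]) :
    aeval (blockDiagonal' N) f = blockDiagonal' fun i => aeval (N i) f := by
  induction f using Polynomial.induction_on' with
  | add f g hf hg =>
    rw [map_add, hf, hg, ← blockDiagonal'_add]
    exact congrArg blockDiagonal' (funext fun i => (map_add _ f g).symm)
  | monomial k a =>
    simp only [aeval_monomial, ← Algebra.smul_def, ← blockDiagonal'_pow, ← blockDiagonal'_smul]
    rfl

end BlockDiagonal

section Adjugate

variable {R : Type*} [CommRing R] {m : Type*} [Fintype m] [DecidableEq m]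

theorem det_add_vecMulVec_of_isUnit {M : Matrix m m R} (hM : IsUnit M.det) (u v : m → R) :
    (M + vecMulVec u v).det = M.det + v ⬝ᵥ (M.adjugate *ᵥ u) := by
  rw [vecMulVec_eq Unit, det_add_replicateCol_mul_replicateRow hM, det_unique (n := Unit),
    ← cramer_eq_adjugate_mulVec, ← det_smul_inv_mulVec_eq_cramer _ _ hM, dotProduct_smul,
    smul_eq_mul, Matrix.add_apply, one_apply_eq, mul_add, mul_one, Matrix.mul_assoc,
    ← replicateCol_mulVec, replicateRow_mul_replicateCol_apply]

theorem det_add_vecMulVec [IsDomain R] {M : Matrix m m R} (hM : M.det ≠ 0) (u v : m → R) :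
    (M + vecMulVec u v).det = M.det + v ⬝ᵥ (M.adjugate *ᵥ u) := by
  let φ := algebraMap R (FractionRing R)
  apply IsFractionRing.injective R (FractionRing R)
  have hM' : IsUnit (φ.mapMatrix M).det := by
    rw [← RingHom.map_det]
    exact (map_ne_zero_iff _ (IsFractionRing.injective R _)).2 hM |>.isUnit
  have h := det_add_vecMulVec_of_isUnit hM' (φ ∘ u) (φ ∘ v)
  rw [← RingHom.map_adjugate, ← RingHom.map_det] at h
  rw [map_add φ, RingHom.map_det, RingHom.map_dotProduct,
    show φ ∘ (M.adjugate *ᵥ u) = φ.mapMatrix M.adjugate *ᵥ (φ ∘ u) from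
      funext (RingHom.map_mulVec φ _ u), ← h]
  congr 2
  ext i j
  simp [φ, vecMulVec_apply]

theorem charmatrix_dvd_scalar_of_aeval_eq_zero {A : Matrix m m R} {f : R[X]}
    (hAf : aeval A f = 0) : charmatrix A ∣ scalar m f := by
  have h := (Algebra.commute_algebraMap_left (X : R[X])
    ((C : R →+* R[X]).mapMatrix A)).sub_dvd_aeval_sub f
  rw [aeval_algebraMap_apply, aeval_X_left_apply,
    show (C : R →+* R[X]).mapMatrix A = (Algebra.ofId R R[X]).mapMatrix A from rfl,
    aeval_algHom_apply, hAf, map_zero, sub_zero] at h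
  exact h

theorem dvd_adjugate_charmatrix {A : Matrix m m R} {f g : R[X]} (hf : f.Monic)
    (hAf : aeval A f = 0) (hchar : A.charpoly = g * f) (i j : m) :
    g ∣ (charmatrix A).adjugate i j := by
  obtain ⟨Q, hQ⟩ := charmatrix_dvd_scalar_of_aeval_eq_zero hAf
  have hcancel : f • (charmatrix A).adjugate = f • g • Q :=
    calc f • (charmatrix A).adjugate = (charmatrix A).adjugate * scalar m f := by
          ext; simp [mul_comm]
      _ = (g * f) • Q := by
          rw [hQ, ← Matrix.mul_assoc, adjugate_mul, ← charpoly, hchar, smul_mul, Matrix.one_mul]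
      _ = f • g • Q := by rw [mul_comm, mul_smul]
  exact ⟨Q i j, hf.isRegular.left (by simpa using congrFun (congrFun hcancel i) j)⟩

end Adjugate

section RankOne

variable {K : Type*} [Field K]

theorem exists_eq_vecMulVec_of_rank_le_one {m n : Type*} [Fintype n] [DecidableEq n]
    {B : Matrix m n K} (hB : B.rank ≤ 1) : ∃ u v, B = vecMulVec u v := by
  obtain ⟨u, hu⟩ := (Submodule.finrank_le_one_iff_isPrincipal _).1 hB
  have hcol : ∀ j, ∃ c : K, c • u = fun i => B i j := fun j =>
    Submodule.mem_span_singleton.1 (hu ▸ ⟨Pi.single j 1, by ext; simp⟩)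
  choose c hc using hcol
  refine ⟨u, c, Matrix.ext fun i j => ?_⟩
  rw [vecMulVec_apply, ← congrFun (hc j) i, Pi.smul_apply, smul_eq_mul, mul_comm]

theorem rank_le_one_of_eq_zero_off_col {m n : Type*} [Fintype n] [DecidableEq n]
    {B : Matrix m n K} (j₀ : n) (h : ∀ i j, j ≠ j₀ → B i j = 0) : B.rank ≤ 1 := by
  have : B = vecMulVec (fun i => B i j₀) (Pi.single j₀ 1) := by
    ext i j
    by_cases hj : j = j₀ <;> simp [vecMulVec_apply, hj, h]
  exact this ▸ rank_vecMulVec_le _ _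

variable {m : Type*} [Fintype m] [DecidableEq m]

theorem dvd_charpoly_add_of_rank_le_one {A B : Matrix m m K} {f g : K[X]} (hf : f.Monic)
    (hAf : aeval A f = 0) (hchar : A.charpoly = g * f) (hB : B.rank ≤ 1) :
    g ∣ (A + B).charpoly := by
  obtain ⟨u, v, rfl⟩ := exists_eq_vecMulVec_of_rank_le_one hB
  have hcm : charmatrix (A + vecMulVec u v) =
      charmatrix A + vecMulVec (fun i => -C (u i)) (fun j => C (v j)) := by
    ext i j : 1
    simp only [charmatrix_apply, add_apply, vecMulVec_apply, map_add, map_mul, neg_mul]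
    ring
  rw [charpoly, hcm, det_add_vecMulVec (charpoly_monic A).ne_zero, ← charpoly, hchar]
  refine dvd_add (dvd_mul_right g f) (dvd_sum fun i _ => dvd_mul_of_dvd_right
    (dvd_sum fun j _ => dvd_mul_of_dvd_left (dvd_adjugate_charmatrix hf hAf hchar i j) _) _)

theorem charpoly_conj {P : Matrix m m K} (hP : IsUnit P.det) (M : Matrix m m K) :
    (P * M * P⁻¹).charpoly = M.charpoly := by
  rw [← ((isUnit_iff_isUnit_det P).2 hP).unit_spec, charpoly_units_conj]

theorem exists_rank_le_one_charpoly_conj_add_iff {P : Matrix m m K} (hP : IsUnit P.det)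
    (A : Matrix m m K) (q : K[X]) :
    (∃ B : Matrix m m K, B.rank ≤ 1 ∧ (P * A * P⁻¹ + B).charpoly = q) ↔
      ∃ B : Matrix m m K, B.rank ≤ 1 ∧ (A + B).charpoly = q := by
  have hrank (B : Matrix m m K) : (P * B * P⁻¹).rank = B.rank := by
    rw [rank_mul_eq_left_of_isUnit_det _ _ (isUnit_nonsing_inv_det P hP),
      rank_mul_eq_right_of_isUnit_det _ _ hP]
  constructor
  · rintro ⟨B, hB, rfl⟩
    have hB' : P * (P⁻¹ * B * P) * P⁻¹ = B := by
      simp only [Matrix.mul_assoc, mul_nonsing_inv _ hP, Matrix.mul_one,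
        mul_nonsing_inv_cancel_left _ _ hP]
    refine ⟨P⁻¹ * B * P, by rwa [← hrank, hB'], ?_⟩
    rw [← charpoly_conj hP, Matrix.mul_add, Matrix.add_mul, hB']
  · rintro ⟨B, hB, rfl⟩
    exact ⟨P * B * P⁻¹, (hrank B).trans_le hB,
      by rw [← Matrix.add_mul, ← Matrix.mul_add, charpoly_conj hP]⟩

theorem exists_rank_le_one_charpoly_reindex_add_iff {n : Type*} [Fintype n] [DecidableEq n]
    (e : m ≃ n) (A : Matrix m m K) (q : K[X]) :
    (∃ B : Matrix n n K, B.rank ≤ 1 ∧ (reindex e e A + B).charpoly = q) ↔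
      ∃ B : Matrix m m K, B.rank ≤ 1 ∧ (A + B).charpoly = q := by
  constructor
  · rintro ⟨B, hB, rfl⟩
    refine ⟨reindex e.symm e.symm B, by rwa [rank_reindex], ?_⟩
    rw [← charpoly_reindex e]
    simp [submatrix_add]
  · rintro ⟨B, hB, rfl⟩
    refine ⟨reindex e e B, by rwa [rank_reindex], ?_⟩
    rw [← charpoly_reindex e]
    simp [submatrix_add]

end RankOne

end Matrix

section Companion

theorem Polynomial.X_pow_natDegree_modByMonic {R : Type*} [CommRing R] {p : R[X]}
    (hp : p.Monic) : X ^ p.natDegree %ₘ p = X ^ p.natDegree - p := by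
  nontriviality R
  have hdeg : (X ^ p.natDegree : R[X]).degree = p.degree := by
    rw [degree_X_pow, degree_eq_natDegree hp.ne_zero]
  refine (div_modByMonic_unique 1 _ hp ⟨by ring, ?_⟩).2
  rw [← hdeg]
  exact degree_sub_lt_left hdeg (monic_X_pow _).ne_zero
    (by rw [leadingCoeff_X_pow, hp.leadingCoeff])

variable {K : Type*} [Field K]

theorem leftMulMatrix_root_eq_companionMatrix {p : K[X]} (hp : p.Monic) :
    Algebra.leftMulMatrix (AdjoinRoot.powerBasisAux' hp) (AdjoinRoot.root p) =
      companionMatrix p.natDegree p := by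
  ext i j
  have hbasis : AdjoinRoot.powerBasisAux' hp j = AdjoinRoot.root p ^ (j : ℕ) :=
    (AdjoinRoot.powerBasis' hp).basis_eq_pow j
  rw [Algebra.leftMulMatrix_eq_repr_mul, AdjoinRoot.powerBasisAux'_repr_apply_to_fun, hbasis,
    ← pow_succ', ← AdjoinRoot.mk_X, ← map_pow, AdjoinRoot.modByMonicHom_mk, companionMatrix,
    of_apply]
  have hj := j.isLt
  split_ifs with hlast hsub
  · rw [show (j : ℕ) + 1 = p.natDegree by omega, X_pow_natDegree_modByMonic hp, coeff_sub,
      coeff_X_pow, if_neg (by omega), zero_sub]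
  all_goals
    rw [(modByMonic_eq_self_iff hp).2 (by
      rw [degree_X_pow, degree_eq_natDegree hp.ne_zero]
      exact_mod_cast (by omega : (j : ℕ) + 1 < p.natDegree)), coeff_X_pow]
    simp [hsub]

theorem charpoly_companionMatrix {p : K[X]} (hp : p.Monic) :
    (companionMatrix p.natDegree p).charpoly = p :=
  calc (companionMatrix p.natDegree p).charpoly = minpoly K (AdjoinRoot.root p) := by
        rw [← leftMulMatrix_root_eq_companionMatrix hp]
        exact charpoly_leftMulMatrix (AdjoinRoot.powerBasis' hp)
    _ = p := by rw [AdjoinRoot.minpoly_root hp.ne_zero, hp.leadingCoeff, inv_one, C_1, mul_one]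

end Companion

section CompanionBlocks

variable {K : Type*} [Field K] {ι : Type*} [Fintype ι] [DecidableEq ι] (p : ι → K[X])

abbrev companionBlockDiagonal :
    Matrix (Σ i, Fin (p i).natDegree) (Σ i, Fin (p i).natDegree) K :=
  blockDiagonal' fun i => companionMatrix (p i).natDegree (p i)

theorem charpoly_companionBlockDiagonal (hmon : ∀ i, (p i).Monic) :
    (companionBlockDiagonal p).charpoly = ∏ i, p i := by
  rw [charpoly_blockDiagonal']
  exact prod_congr rfl fun i _ => charpoly_companionMatrix (hmon i)

theorem aeval_companionBlockDiagonal_eq_zero (hmon : ∀ i, (p i).Monic) {f : K[X]}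
    (hf : ∀ i, p i ∣ f) : aeval (companionBlockDiagonal p) f = 0 := by
  rw [aeval_blockDiagonal', ← blockDiagonal'_zero]
  congr 1
  ext1 i
  obtain ⟨c, rfl⟩ := hf i
  have := aeval_self_charpoly (companionMatrix (p i).natDegree (p i))
  rw [charpoly_companionMatrix (hmon i)] at this
  rw [map_mul, this, zero_mul]
  rfl

theorem prod_erase_dvd_charpoly_companionBlockDiagonal_add (hmon : ∀ i, (p i).Monic) {k : ι}
    (hdvd : ∀ i, p i ∣ p k) {B : Matrix _ _ K} (hB : B.rank ≤ 1) :
    (∏ i ∈ univ.erase k, p i) ∣ (companionBlockDiagonal p + B).charpoly := by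
  refine dvd_charpoly_add_of_rank_le_one (hmon k)
    (aeval_companionBlockDiagonal_eq_zero p hmon hdvd) ?_ hB
  rw [charpoly_companionBlockDiagonal p hmon, prod_erase_mul _ _ (mem_univ k)]

theorem exists_rank_le_one_charpoly_companionBlockDiagonal_add (hmon : ∀ i, (p i).Monic)
    {k : ι} (hk : 1 ≤ (p k).natDegree) {r : K[X]} (hr : r.Monic)
    (hrdeg : r.natDegree = (p k).natDegree) :
    ∃ B, B.rank ≤ 1 ∧
      (companionBlockDiagonal p + B).charpoly = (∏ i ∈ univ.erase k, p i) * r := by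
  let N := Function.update (fun i => companionMatrix (p i).natDegree (p i)) k
    (companionMatrix (p k).natDegree r)
  refine ⟨blockDiagonal' N - companionBlockDiagonal p,
    rank_le_one_of_eq_zero_off_col ⟨k, ⟨(p k).natDegree - 1, by omega⟩⟩ ?_, ?_⟩
  · rintro ⟨a, x⟩ ⟨b, y⟩ hy
    unfold companionBlockDiagonal
    rw [Matrix.sub_apply, sub_eq_zero]
    rcases eq_or_ne a b with rfl | hab
    · rw [blockDiagonal'_apply_eq, blockDiagonal'_apply_eq]
      rcases eq_or_ne a k with rfl | hak
      · have hy' : (y : ℕ) ≠ (p a).natDegree - 1 := fun h =>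
          hy (congrArg (Sigma.mk a) (Fin.ext h))
        simp [N, companionMatrix, hy']
      · simp [N, hak]
    · rw [blockDiagonal'_apply_ne _ _ _ hab, blockDiagonal'_apply_ne _ _ _ hab]
  · rw [add_sub_cancel, charpoly_blockDiagonal', ← prod_erase_mul _ _ (mem_univ k)]
    congr 1
    · refine prod_congr rfl fun i hi => ?_
      simp [N, ne_of_mem_erase hi, charpoly_companionMatrix (hmon i)]
    · simp only [N, Function.update_self]
      rw [← hrdeg, charpoly_companionMatrix hr]

theorem exists_rank_le_one_charpoly_companionBlockDiagonal_add_iff (hmon : ∀ i, (p i).Monic)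
    {k : ι} (hk : 1 ≤ (p k).natDegree) (hdvd : ∀ i, p i ∣ p k) {q : K[X]} (hq : q.Monic)
    (hqdeg : q.natDegree = ∑ i, (p i).natDegree) :
    (∃ B, B.rank ≤ 1 ∧ (companionBlockDiagonal p + B).charpoly = q) ↔
      (∏ i ∈ univ.erase k, p i) ∣ q := by
  refine ⟨fun ⟨B, hB, hBq⟩ =>
    hBq ▸ prod_erase_dvd_charpoly_companionBlockDiagonal_add p hmon hdvd hB, fun ⟨r, hr⟩ => ?_⟩
  have hg : (∏ i ∈ univ.erase k, p i).Monic := monic_prod_of_monic _ _ fun i _ => hmon i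
  have hrmon : r.Monic := hg.of_mul_monic_left (hr ▸ hq)
  have hrdeg : r.natDegree = (p k).natDegree := by
    rw [hr, hg.natDegree_mul' hrmon.ne_zero, natDegree_prod_of_monic _ _ fun i _ => hmon i,
      ← sum_erase_add _ _ (mem_univ k)] at hqdeg
    omega
  exact hr ▸ exists_rank_le_one_charpoly_companionBlockDiagonal_add p hmon hk hrmon hrdeg

end CompanionBlocks

/-- Rank-one case: if `A` is an `n×n` matrix over `F` whose rational canonical form has
invariant factors `p 0 ∣ p 1 ∣ ⋯ ∣ p (s-1)` and `q` is monic of degree `n`, then there is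
a rank `≤ 1` matrix `B` over `F` with `charpoly (A+B) = q` iff `p 0 ⋯ p (s-2) ∣ q`. -/
theorem stmt_17 {F : Type*} [Field F] {n s : ℕ}
    (p : Fin s → Polynomial F) (hmon : ∀ i, (p i).Monic)
    (hdeg : ∀ i, 1 ≤ (p i).natDegree)
    (hdvd : ∀ i j : Fin s, i ≤ j → p i ∣ p j)
    (A : Matrix (Fin n) (Fin n) F)
    (e : (Σ i : Fin s, Fin ((p i).natDegree)) ≃ Fin n)
    (P : Matrix (Fin n) (Fin n) F) (hP : IsUnit P.det)
    (hA : A = P * Matrix.reindex e e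
      (Matrix.blockDiagonal' fun i => companionMatrix ((p i).natDegree) (p i)) * P⁻¹)
    (q : Polynomial F) (hq : q.Monic) (hqdeg : q.natDegree = n) :
    (∃ B : Matrix (Fin n) (Fin n) F, B.rank ≤ 1 ∧ (A + B).charpoly = q)
    ↔ (∏ i ∈ Finset.univ.filter (fun i : Fin s => (i : ℕ) < s - 1), p i) ∣ q := by
  have hn : n = ∑ i, (p i).natDegree := by simpa using (Fintype.card_congr e).symm
  rcases Nat.eq_zero_or_pos s with rfl | hs
  · rw [univ_eq_empty, sum_empty] at hn
    subst hn
    obtain rfl : q = 1 := hq.natDegree_eq_zero.1 hqdeg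
    exact ⟨fun _ => by simp, fun _ => ⟨0, by simp, charpoly_isEmpty⟩⟩
  let k : Fin s := ⟨s - 1, by omega⟩
  have hfilter : univ.filter (fun i : Fin s => (i : ℕ) < s - 1) = univ.erase k := by
    ext i
    simp only [mem_filter, mem_univ, true_and, mem_erase, ne_eq, Fin.ext_iff, and_true, k]
    omega
  rw [hA, exists_rank_le_one_charpoly_conj_add_iff hP,
    exists_rank_le_one_charpoly_reindex_add_iff, hfilter]
  exact exists_rank_le_one_charpoly_companionBlockDiagonal_add_iff p hmon (hdeg k)
    (fun i => hdvd i k (Nat.le_sub_one_of_lt i.isLt)) hq (hqdeg.trans hn)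
end
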